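/- arXiv:1307.4274 — 4 statements merged into one kernel-verified Lean document; each statement's English description precedes it below -/
import Mathlib

section
/- For every real number x with 0 ≤ x < 1 it holds that e^{−x} / (1 − x) ≤ e^{x²/(2−2x)}. -/
/-! With `t = 1 - x`, taking logarithms turns the claim into `(t - t⁻¹) / 2 ≤ log t` for
`0 < t ≤ 1`; the left side is `sinh (log t)`, and `sinh u ≤ u` for `u ≤ 0`. -/

open Real

lemma Real.sub_inv_div_two_le_log {t : ℝ} (ht0 : 0 < t) (ht1 : t ≤ 1) :
    (t - t⁻¹) / 2 ≤ log t := by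
  rw [← sinh_log ht0]
  exact sinh_le_self_iff.mpr (log_nonpos ht0.le ht1)

theorem exp_neg_div_one_sub_le (x : ℝ) (hx0 : 0 ≤ x) (hx1 : x < 1) :
    Real.exp (-x) / (1 - x) ≤ Real.exp (x ^ 2 / (2 - 2 * x)) := by
  have ht : 0 < 1 - x := by linarith
  have hlog := sub_inv_div_two_le_log ht (by linarith)
  have hlhs : ((1 - x) - (1 - x)⁻¹) / 2 = -x - x ^ 2 / (2 - 2 * x) := by
    rw [show 2 - 2 * x = 2 * (1 - x) by ring]
    field_simp
    ring
  rw [div_le_iff₀ ht, ← exp_log ht, ← exp_add, exp_le_exp]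
  linarith
end

section
/- For every real number x with 0 ≤ x < 1 it holds that 1 + ∑_{i=1}^∞ x^{2i} / ((1 − x) · (2i)!) ≤ e^{x²/(2−2x)}. -/
/-!
Since `2 ^ n * n ! ≤ (2 * n)!` and `(1 - x) ^ n ≤ 1 - x` for `n ≥ 1`, the `n`-th term of the series
is at most `(x ^ 2 / (2 - 2 * x)) ^ n / n !`, the `n`-th term of the exponential series at
`x ^ 2 / (2 - 2 * x)`.
-/

open Nat

lemma Real.hasSum_pow_succ_div_factorial_succ (y : ℝ) :
    HasSum (fun i : ℕ => y ^ (i + 1) / (i + 1)!) (Real.exp y - 1) := by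
  have h := (hasSum_nat_add_iff' 1).mpr (NormedSpace.expSeries_div_hasSum_exp y)
  simpa [← Real.exp_eq_exp_ℝ] using h

lemma pow_two_mul_div_le_pow_div_factorial {x : ℝ} (hx0 : 0 ≤ x) (hx1 : x < 1) {n : ℕ}
    (hn : n ≠ 0) :
    x ^ (2 * n) / ((1 - x) * (2 * n)!) ≤ (x ^ 2 / (2 - 2 * x)) ^ n / n ! := by
  have hpos : 0 < 1 - x := by linarith
  have hpow : (1 - x) ^ n ≤ 1 - x := pow_le_of_le_one hpos.le (by linarith) hn
  have hfact : (2 : ℝ) ^ n * n ! ≤ (2 * n)! := by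
    exact_mod_cast Nat.two_pow_mul_factorial_le_factorial_two_mul n
  have hrhs : (x ^ 2 / (2 - 2 * x)) ^ n / n ! = x ^ (2 * n) / ((1 - x) ^ n * (2 ^ n * n !)) := by
    rw [div_pow, ← pow_mul, div_div, show (2 : ℝ) - 2 * x = 2 * (1 - x) by ring, mul_pow]
    ring
  rw [hrhs]
  gcongr

theorem one_add_tsum_le_exp (x : ℝ) (hx0 : 0 ≤ x) (hx1 : x < 1) :
    1 + ∑' i : ℕ, x ^ (2 * (i + 1)) / ((1 - x) * Nat.factorial (2 * (i + 1)))
      ≤ Real.exp (x ^ 2 / (2 - 2 * x)) := by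
  set y := x ^ 2 / (2 - 2 * x)
  have hterm (i : ℕ) : x ^ (2 * (i + 1)) / ((1 - x) * (2 * (i + 1))!) ≤ y ^ (i + 1) / (i + 1)! :=
    pow_two_mul_div_le_pow_div_factorial hx0 hx1 i.succ_ne_zero
  have hexp := Real.hasSum_pow_succ_div_factorial_succ y
  have hsummable : Summable fun i : ℕ => x ^ (2 * (i + 1)) / ((1 - x) * (2 * (i + 1))!) :=
    hexp.summable.of_nonneg_of_le (fun i => div_nonneg (by positivity)
      (mul_nonneg (by linarith) (by positivity))) hterm
  linarith [hasSum_le hterm hsummable.hasSum hexp]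
end

section
/- Let Y be geometrically distributed on {1, 2, 3, …} with success probability p ∈ (0, 1]. For every real number t ≥ 0 it holds that E[e^{−tY}] ≤ 1 / (1 + t/p) ≤ e^{t²/(2p²)} · e^{−t/p}. -/
/-! `Y - 1` has Mathlib's geometric law on `ℕ`, so `E[e^{-tY}] = p / (e^t - (1 - p))`, which is at
most `p / (p + t)` since `e^t ≥ 1 + t`. With `s = t / p` the second inequality is
`log (1 + s) ≥ s - s^2 / 2`, a consequence of `log (1 + s) ≥ 2s / (s + 2)`. -/

open MeasureTheory ProbabilityTheory Real

theorem MeasureTheory.Measure.ext_of_singleton_of_ne {α : Type*} [MeasurableSpace α]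
    [MeasurableSingletonClass α] [Countable α] {ν ν' : Measure α} [IsFiniteMeasure ν]
    (huniv : ν Set.univ = ν' Set.univ) (a₀ : α) (h : ∀ a ≠ a₀, ν {a} = ν' {a}) :
    ν = ν' := by
  have hcompl : ν {a₀}ᶜ = ν' {a₀}ᶜ := by
    have hrestrict : ν.restrict {a₀}ᶜ = ν'.restrict {a₀}ᶜ := by
      refine Measure.ext_of_singleton fun a ↦ ?_
      simp only [Measure.restrict_apply (measurableSet_singleton a)]
      by_cases ha : a = a₀
      · simp [ha]
      · rw [Set.inter_eq_left.mpr (Set.singleton_subset_iff.mpr ha), h a ha]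
    simpa using congr($hrestrict Set.univ)
  refine Measure.ext_of_singleton fun a ↦ ?_
  by_cases ha : a = a₀
  · subst ha
    have hν := measure_add_measure_compl (μ := ν) (measurableSet_singleton a)
    have hν' := measure_add_measure_compl (μ := ν') (measurableSet_singleton a)
    rw [hcompl, huniv, ← hν'] at hν
    exact (ENNReal.add_left_inj (hcompl ▸ measure_ne_top ν _)).mp hν
  · exact h a ha

lemma map_eq_geometricMeasure_map_succ {Ω : Type*} [MeasurableSpace Ω] {μ : Measure Ω}
    [IsProbabilityMeasure μ] {Y : Ω → ℕ} (hY : Measurable Y) {p : unitInterval} (hp : p ≠ 0)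
    (hgeom : ∀ n : ℕ, μ (Y ⁻¹' {n + 1}) = ENNReal.ofReal ((1 - p) ^ n * p)) :
    μ.map Y = (geometricMeasure p).map (· + 1) := by
  refine Measure.ext_of_singleton_of_ne (by simp [Measure.map_apply, hY, measurable_of_countable]) 0
    fun a ha ↦ ?_
  obtain ⟨n, rfl⟩ := Nat.exists_eq_add_one.mpr (Nat.pos_of_ne_zero ha)
  rw [Measure.map_apply hY (measurableSet_singleton _), hgeom,
    Measure.map_apply (by fun_prop) (measurableSet_singleton _),
    show (· + 1) ⁻¹' {n + 1} = {n} by ext; simp, geometricMeasure_singleton hp]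

lemma integral_exp_neg_mul_succ_geometricMeasure {p : unitInterval} (hp : p ≠ 0) {t : ℝ}
    (ht : 0 ≤ t) :
    ∫ n, exp (-t * (n + 1)) ∂geometricMeasure p = p / (exp t - (1 - p)) := by
  have hr0 : 0 ≤ (1 - p : ℝ) * exp (-t) := mul_nonneg (by grind) (exp_pos _).le
  have hr1 : (1 - p : ℝ) * exp (-t) < 1 := by
    have : exp (-t) ≤ 1 := exp_le_one_iff.mpr (by linarith)
    have : (0 : ℝ) < p := unitInterval.pos_iff_ne_zero.mpr hp
    nlinarith [exp_pos (-t)]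
  have hterm : ∀ n : ℕ, ((1 - p : ℝ) ^ n * p) • exp (-t * (n + 1)) =
      p * exp (-t) * ((1 - p) * exp (-t)) ^ n := by
    intro n
    rw [smul_eq_mul, mul_pow, ← exp_nat_mul, show -t * ((n : ℝ) + 1) = n * -t + -t by ring,
      exp_add]
    ring
  rw [integral_geometricMeasure hp, tsum_congr hterm, tsum_mul_left,
    tsum_geometric_of_lt_one hr0 hr1, exp_neg]
  field_simp [(exp_pos t).ne']

lemma div_exp_sub_one_sub_le_one_div_one_add_div {p t : ℝ} (hp : 0 < p) (ht : 0 ≤ t) :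
    p / (exp t - (1 - p)) ≤ 1 / (1 + t / p) :=
  calc p / (exp t - (1 - p)) ≤ p / (p + t) :=
        div_le_div_of_nonneg_left hp.le (by positivity) (by linarith [add_one_le_exp t])
    _ = 1 / (1 + t / p) := by field_simp

lemma sub_sq_div_two_le_log_one_add {x : ℝ} (hx : 0 ≤ x) : x - x ^ 2 / 2 ≤ log (1 + x) :=
  calc x - x ^ 2 / 2 ≤ 2 * x / (x + 2) := by
        rw [le_div_iff₀ (by positivity)]; nlinarith [pow_nonneg hx 3]
    _ ≤ log (1 + x) := le_log_one_add_of_nonneg hx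

lemma one_div_one_add_le_exp_sq_div_two_sub {x : ℝ} (hx : 0 ≤ x) :
    1 / (1 + x) ≤ exp (x ^ 2 / 2 - x) :=
  calc 1 / (1 + x) = exp (-log (1 + x)) := by
        rw [exp_neg, exp_log (by positivity), one_div]
    _ ≤ exp (x ^ 2 / 2 - x) := exp_le_exp.mpr (by linarith [sub_sq_div_two_le_log_one_add hx])

theorem geometric_mgf_neg_bound
    {Ω : Type*} [MeasurableSpace Ω] (μ : Measure Ω) [IsProbabilityMeasure μ]
    (Y : Ω → ℕ) (p : ℝ) (hp0 : 0 < p) (hp1 : p ≤ 1)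
    (hmeas : Measurable Y)
    (hgeom : ∀ j : ℕ, 1 ≤ j →
      μ {ω | Y ω = j} = ENNReal.ofReal ((1 - p) ^ (j - 1) * p))
    (t : ℝ) (ht : 0 ≤ t) :
    (∫ ω, Real.exp (-t * (Y ω : ℝ)) ∂μ) ≤ 1 / (1 + t / p) ∧
    1 / (1 + t / p) ≤ Real.exp (t ^ 2 / (2 * p ^ 2)) * Real.exp (-t / p) := by
  set q : unitInterval := ⟨p, hp0.le, hp1⟩
  have hq : q ≠ 0 := fun h ↦ hp0.ne' congr($h.1)
  have hlaw : μ.map Y = (geometricMeasure q).map (· + 1) :=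
    map_eq_geometricMeasure_map_succ hmeas hq fun n ↦
      (hgeom (n + 1) n.succ_pos).trans (by simp [q])
  have hmgf : ∫ ω, exp (-t * Y ω) ∂μ = p / (exp t - (1 - p)) := by
    rw [← integral_map (f := fun n : ℕ ↦ exp (-t * n)) hmeas.aemeasurable (by fun_prop), hlaw,
      integral_map (by fun_prop) (by fun_prop)]
    push_cast
    exact integral_exp_neg_mul_succ_geometricMeasure hq ht
  refine ⟨hmgf ▸ div_exp_sub_one_sub_le_one_div_one_add_div hp0 ht, ?_⟩
  rw [← exp_add]
  convert one_div_one_add_le_exp_sq_div_two_sub (div_nonneg ht hp0.le) using 2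
  ring
end

section
/- Let Y be geometrically distributed on {1, 2, 3, …} with success probability p ∈ (0, 1]. For every real number t with 0 ≤ t ≤ p/2 it holds that E[e^{tY}] ≤ e^{t/p} · e^{t²/p²}. -/
/-! The law of `Y` is the geometric law on `ℕ` shifted by one, so
`E[e^{tY}] = ∑ₙ (1 - p)ⁿ p e^{t(n+1)} = p / (e^{-t} - (1 - p))`. Since `e^{-t} ≥ 1 - t`, this is at
most `p / (p - t) = 1 / (1 - u)` with `u = t / p ≤ 1 / 2`, and `1 / (1 - u) ≤ e^{u + u²}` there by
the quadratic lower bound `1 + x + x² / 2 ≤ eˣ`. -/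

open MeasureTheory ProbabilityTheory Real Set

lemma inv_one_sub_le_exp_add_sq {u : ℝ} (hu0 : 0 ≤ u) (hu : u ≤ 1 / 2) :
    (1 - u)⁻¹ ≤ exp (u + u ^ 2) := by
  rw [inv_le_iff_one_le_mul₀ (by linarith)]
  calc (1 : ℝ) ≤ (1 + (u + u ^ 2) + (u + u ^ 2) ^ 2 / 2) * (1 - u) := by
        nlinarith [pow_le_pow_left₀ hu0 hu 3, mul_nonneg hu0 (sq_nonneg u)]
    _ ≤ exp (u + u ^ 2) * (1 - u) := by
        gcongr
        · linarith
        · exact quadratic_le_exp_of_nonneg (by positivity)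

lemma div_exp_neg_sub_one_sub_le {p t : ℝ} (hp : 0 < p) (ht0 : 0 ≤ t) (ht : t ≤ p / 2) :
    p / (exp (-t) - (1 - p)) ≤ exp (t / p) * exp (t ^ 2 / p ^ 2) := by
  have hu : t / p ≤ 1 / 2 := by rw [div_le_iff₀ hp]; linarith
  calc p / (exp (-t) - (1 - p)) ≤ p / (p - t) :=
        div_le_div_of_nonneg_left hp.le (by linarith) (by linarith [one_sub_le_exp_neg t])
    _ = (1 - t / p)⁻¹ := by field_simp
    _ ≤ exp (t / p + (t / p) ^ 2) := inv_one_sub_le_exp_add_sq (by positivity) hu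
    _ = exp (t / p) * exp (t ^ 2 / p ^ 2) := by rw [exp_add, div_pow]

lemma hasSum_geometric_mul_exp_succ {p t : ℝ} (hp : p ≤ 1) (ht : t < p) :
    HasSum (fun n : ℕ => (1 - p) ^ n * p * exp (t * (n + 1))) (p / (exp (-t) - (1 - p))) := by
  have hgap : 1 - p < exp (-t) := by linarith [one_sub_le_exp_neg t]
  have hr : (1 - p) * exp t < 1 := by
    simpa [← exp_add] using mul_lt_mul_of_pos_right hgap (exp_pos t)
  have hfun : (fun n : ℕ => (1 - p) ^ n * p * exp (t * (n + 1)))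
      = fun n : ℕ => p * exp t * ((1 - p) * exp t) ^ n := by
    ext n
    rw [mul_add, mul_one, exp_add, mul_comm t, exp_nat_mul, mul_pow]
    ring
  have hsum : p / (exp (-t) - (1 - p)) = p * exp t * (1 - (1 - p) * exp t)⁻¹ := by
    rw [exp_neg] at hgap ⊢
    field_simp [(sub_pos.2 hgap).ne', (sub_pos.2 hr).ne']
  rw [hfun, hsum]
  exact (hasSum_geometric_of_lt_one (by positivity [sub_nonneg.2 hp]) hr).mul_left _

namespace MeasureTheory.Measure

theorem ext_of_singleton_of_forall_ne {α : Type*} [MeasurableSpace α] [Countable α]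
    [MeasurableSingletonClass α] {μ ν : Measure α} [IsFiniteMeasure μ]
    (huniv : μ univ = ν univ) (a : α) (h : ∀ b ≠ a, μ {b} = ν {b}) : μ = ν := by
  have hcompl : μ {a}ᶜ = ν {a}ᶜ := by
    have hres : μ.restrict {a}ᶜ = ν.restrict {a}ᶜ := ext_of_singleton fun b => by
      rw [restrict_apply (measurableSet_singleton b),
        restrict_apply (measurableSet_singleton b)]
      rcases eq_or_ne b a with rfl | hb
      · simp
      · rw [singleton_inter_of_mem (mem_compl_singleton_iff.2 hb), h b hb]
    simpa using congrArg (· univ) hres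
  refine ext_of_singleton fun b => ?_
  rcases eq_or_ne b a with rfl | hb
  · refine (ENNReal.add_left_inj (measure_ne_top μ {b}ᶜ)).1 ?_
    rw [measure_add_measure_compl (measurableSet_singleton b), huniv, hcompl,
      measure_add_measure_compl (measurableSet_singleton b)]
  · exact h b hb

end MeasureTheory.Measure

lemma map_eq_map_succ_geometricMeasure {Ω : Type*} [MeasurableSpace Ω] {μ : Measure Ω}
    [IsProbabilityMeasure μ] {Y : Ω → ℕ} (hY : Measurable Y) {P : unitInterval} (hP : P ≠ 0)
    (h : ∀ n, μ (Y ⁻¹' {n + 1}) = ENNReal.ofReal ((1 - P) ^ n * P)) :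
    μ.map Y = (geometricMeasure P).map (· + 1) := by
  have hsucc : Measurable (· + 1 : ℕ → ℕ) := measurable_from_top
  refine Measure.ext_of_singleton_of_forall_ne ?_ 0 fun b hb => ?_
  · simp [Measure.map_apply hY MeasurableSet.univ, Measure.map_apply hsucc MeasurableSet.univ]
  · obtain ⟨n, rfl⟩ := Nat.exists_eq_succ_of_ne_zero hb
    rw [Measure.map_apply hY (measurableSet_singleton _),
      Measure.map_apply hsucc (measurableSet_singleton _), h n, ← geometricMeasure_singleton hP]
    congr
    ext m
    simp

theorem geometric_mgf_pos_bound
    {Ω : Type*} [MeasurableSpace Ω] (μ : Measure Ω) [IsProbabilityMeasure μ]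
    (Y : Ω → ℕ) (p : ℝ) (hp0 : 0 < p) (hp1 : p ≤ 1)
    (hmeas : Measurable Y)
    (hgeom : ∀ j : ℕ, 1 ≤ j →
      μ {ω | Y ω = j} = ENNReal.ofReal ((1 - p) ^ (j - 1) * p))
    (t : ℝ) (ht0 : 0 ≤ t) (ht1 : t ≤ p / 2) :
    Integrable (fun ω => Real.exp (t * (Y ω : ℝ))) μ ∧
    (∫ ω, Real.exp (t * (Y ω : ℝ)) ∂μ) ≤ Real.exp (t / p) * Real.exp (t ^ 2 / p ^ 2) := by
  obtain ⟨P, rfl⟩ : ∃ P : unitInterval, (P : ℝ) = p := ⟨⟨p, hp0.le, hp1⟩, rfl⟩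
  have hP : P ≠ 0 := by rintro rfl; simp at hp0
  have hlaw : μ.map Y = (geometricMeasure P).map (· + 1) :=
    map_eq_map_succ_geometricMeasure hmeas hP fun n => hgeom (n + 1) le_add_self
  have hsum := hasSum_geometric_mul_exp_succ (t := t) hp1 (by linarith)
  have hint : Integrable (fun n : ℕ => exp (t * n)) (μ.map Y) := by
    rw [hlaw, integrable_map_measure .of_discrete measurable_from_top.aemeasurable]
    refine (integrable_geometricMeasure_iff hP).2 ?_
    simpa [abs_of_pos (exp_pos _)] using hsum.summable
  refine ⟨(integrable_map_measure .of_discrete hmeas.aemeasurable).1 hint, ?_⟩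
  rw [← integral_map (f := fun n : ℕ => exp (t * n)) hmeas.aemeasurable .of_discrete, hlaw,
    integral_map measurable_from_top.aemeasurable .of_discrete, integral_geometricMeasure hP]
  simpa [hsum.tsum_eq] using div_exp_neg_sub_one_sub_le hp0 ht0 ht1
end
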